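/- arXiv:2411.04908 — 2 statements merged into one kernel-verified Lean document; each statement's English description precedes it below -/
import Mathlib

section
/- For every d ≥ 2, there exists a non-empty, bounded, path-connected open set X ⊂ ℝ^d with the following property: for every probability measure ρ on X whose density is bounded above and below by positive constants on X, for every C > 0, q > 0 and p ∈ [1,∞), there exist probability measures μ, ν supported in the closed unit ball of ℝ^d and Brenier potentials φ_μ for (ρ,μ) and φ_ν for (ρ,ν) such that ‖φ_μ − φ_ν‖_{L²(ρ)} > C · W_p(μ,ν)^q. -/
/-!
The set is a chain of cubes of side `4⁻¹ ^ n` joined by necks of width `2⁻¹ ^ (n ^ 2)`.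
The ramps `x ↦ max (x 0 - β) 0`, with `β` at either end of the `n`-th neck, are Brenier
potentials whose gradients (`0` or the first basis vector) differ only on the slab cut out by
that neck. Coupling the two targets through `ρ` bounds their `W_p` distance by twice the
`1/p`-th power of the neck's mass, which is `O(2⁻¹ ^ (n ^ 2 / p))` as `d ≥ 2`. The potentials
themselves differ by a step of height `4⁻¹ ^ n` across the neck, so whatever constant
normalises them, their `L²(ρ)` distance is at least of order `4⁻¹ ^ n` times the square root
of the mass of a cube, only exponentially small in `n`. The superexponential decay wins.
-/

open MeasureTheory
open scoped NNReal ENNReal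

noncomputable section

/-- The p-Wasserstein distance between two probability measures on `ℝ^d`. -/
def Wp {d : ℕ} (p : ℝ) (μ ν : Measure (EuclideanSpace ℝ (Fin d))) : ℝ :=
  sInf { r : ℝ | ∃ γ : Measure (EuclideanSpace ℝ (Fin d) × EuclideanSpace ℝ (Fin d)),
    IsProbabilityMeasure γ ∧ γ.map Prod.fst = μ ∧ γ.map Prod.snd = ν ∧
    r = (∫ q, dist q.1 q.2 ^ p ∂γ) ^ (1 / p) }

/-- `φ` is a Brenier potential for `(ρ, μ)`. -/
def IsBrenierPotential {d : ℕ} (ρ μ : Measure (EuclideanSpace ℝ (Fin d)))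
    (φ : EuclideanSpace ℝ (Fin d) → ℝ) : Prop :=
  ConvexOn ℝ Set.univ φ ∧ (∃ L : ℝ≥0, LipschitzWith L φ) ∧
  (∫ x, φ x ∂ρ) = 0 ∧ Measure.map (fun x => gradient φ x) ρ = μ

open Set Metric Function

section Wasserstein

variable {d : ℕ} {p : ℝ}

lemma Wp_nonneg (μ ν : Measure (EuclideanSpace ℝ (Fin d))) : 0 ≤ Wp p μ ν := by
  refine Real.sInf_nonneg ?_
  rintro r ⟨γ, -, -, -, rfl⟩
  exact Real.rpow_nonneg (integral_nonneg fun _ => Real.rpow_nonneg dist_nonneg p) _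

variable {ρ : Measure (EuclideanSpace ℝ (Fin d))} [IsProbabilityMeasure ρ]
  {g₁ g₂ : EuclideanSpace ℝ (Fin d) → EuclideanSpace ℝ (Fin d)}

lemma Wp_map_le (hg₁ : Measurable g₁) (hg₂ : Measurable g₂) :
    Wp p (ρ.map g₁) (ρ.map g₂) ≤ (∫ x, dist (g₁ x) (g₂ x) ^ p ∂ρ) ^ (1 / p) := by
  have hg : Measurable fun x => (g₁ x, g₂ x) := hg₁.prodMk hg₂
  refine csInf_le ⟨0, fun r hr => ?_⟩ ⟨ρ.map fun x => (g₁ x, g₂ x),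
    Measure.isProbabilityMeasure_map hg.aemeasurable, ?_, ?_, ?_⟩
  · obtain ⟨γ, -, -, -, rfl⟩ := hr
    exact Real.rpow_nonneg (integral_nonneg fun _ => Real.rpow_nonneg dist_nonneg p) _
  · rw [Measure.map_map measurable_fst hg]; rfl
  · rw [Measure.map_map measurable_snd hg]; rfl
  · rw [integral_map hg.aemeasurable
      ((measurable_fst.dist measurable_snd).pow_const p).aestronglyMeasurable]

lemma Wp_map_le_of_eqOn_compl (hp : 0 < p) (hg₁ : Measurable g₁) (hg₂ : Measurable g₂)
    {R : ℝ} (hR : 0 ≤ R) (hdist : ∀ x, dist (g₁ x) (g₂ x) ≤ R)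
    {S : Set (EuclideanSpace ℝ (Fin d))} (hS : MeasurableSet S) (heq : ∀ x ∉ S, g₁ x = g₂ x) :
    Wp p (ρ.map g₁) (ρ.map g₂) ≤ R * ρ.real S ^ (1 / p) := by
  have hpoint : ∀ x, dist (g₁ x) (g₂ x) ^ p ≤ S.indicator (fun _ => R ^ p) x := by
    intro x
    by_cases hx : x ∈ S
    · rw [indicator_of_mem hx]
      exact Real.rpow_le_rpow dist_nonneg (hdist x) hp.le
    · rw [indicator_of_notMem hx, heq x hx, dist_self, Real.zero_rpow hp.ne']
  have hint : ∫ x, dist (g₁ x) (g₂ x) ^ p ∂ρ ≤ R ^ p * ρ.real S := by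
    calc ∫ x, dist (g₁ x) (g₂ x) ^ p ∂ρ ≤ ∫ x, S.indicator (fun _ => R ^ p) x ∂ρ :=
          integral_mono_of_nonneg (.of_forall fun _ => Real.rpow_nonneg dist_nonneg p)
            ((integrable_const _).indicator hS) (.of_forall hpoint)
      _ = R ^ p * ρ.real S := by rw [integral_indicator_const _ hS, smul_eq_mul, mul_comm]
  calc Wp p (ρ.map g₁) (ρ.map g₂) ≤ (∫ x, dist (g₁ x) (g₂ x) ^ p ∂ρ) ^ (1 / p) :=
        Wp_map_le hg₁ hg₂
    _ ≤ (R ^ p * ρ.real S) ^ (1 / p) :=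
        Real.rpow_le_rpow (integral_nonneg fun _ => Real.rpow_nonneg dist_nonneg p) hint
          (by positivity)
    _ = R * ρ.real S ^ (1 / p) := by
        rw [one_div, Real.mul_rpow (Real.rpow_nonneg hR p) measureReal_nonneg,
          Real.rpow_rpow_inv hR hp.ne']

end Wasserstein

section Gradient

variable {F : Type*} [NormedAddCommGroup F] [InnerProductSpace ℝ F] [CompleteSpace F]

lemma gradient_sub_const (φ : F → ℝ) (c : ℝ) : gradient (fun x => φ x - c) = gradient φ := by
  ext1 x
  rw [gradient, gradient, fderiv_sub_const]

lemma norm_gradient_le_of_lipschitz {φ : F → ℝ} {L : ℝ≥0} (hφ : LipschitzWith L φ) (x : F) :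
    ‖gradient φ x‖ ≤ L := by
  rw [gradient, LinearIsometryEquiv.norm_map]
  exact norm_fderiv_le_of_lipschitz ℝ hφ

variable [MeasurableSpace F] [BorelSpace F]

lemma measurable_gradient (φ : F → ℝ) : Measurable (gradient φ) :=
  (InnerProductSpace.toDual ℝ F).symm.continuous.measurable.comp (measurable_fderiv ℝ φ)

end Gradient

lemma integral_sub_integral_eq_zero {α : Type*} [MeasurableSpace α] {ρ : Measure α}
    [IsProbabilityMeasure ρ] (f : α → ℝ) : ∫ x, (f x - ∫ y, f y ∂ρ) ∂ρ = 0 := by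
  by_cases hf : Integrable f ρ
  · simp [integral_sub hf (integrable_const _)]
  -- otherwise `f - c` is not integrable either, and its integral is `0` by convention
  · refine integral_undef fun h => hf ?_
    simpa using (integrable_add_const_iff (c := ∫ y, f y ∂ρ)).mpr h

section Brenier

variable {d : ℕ} {ρ : Measure (EuclideanSpace ℝ (Fin d))}

lemma map_closedBall_compl_eq_zero {g : EuclideanSpace ℝ (Fin d) → EuclideanSpace ℝ (Fin d)}
    (hg : Measurable g) {r : ℝ} (hr : ∀ x, ‖g x‖ ≤ r) : ρ.map g (closedBall 0 r)ᶜ = 0 := by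
  rw [Measure.map_apply hg measurableSet_closedBall.compl]
  convert measure_empty (μ := ρ)
  exact eq_empty_of_forall_notMem fun x hx => hx (mem_closedBall_zero_iff.mpr (hr x))

lemma isBrenierPotential_sub_integral [IsProbabilityMeasure ρ] {φ : EuclideanSpace ℝ (Fin d) → ℝ}
    (hconv : ConvexOn ℝ univ φ) {L : ℝ≥0} (hlip : LipschitzWith L φ) :
    IsBrenierPotential ρ (ρ.map (gradient φ)) (fun x => φ x - ∫ y, φ y ∂ρ) := by
  refine ⟨hconv.sub (concaveOn_const _ convex_univ), ⟨L, ?_⟩, integral_sub_integral_eq_zero φ, ?_⟩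
  · simpa using hlip.sub (LipschitzWith.const (∫ y, φ y ∂ρ))
  · rw [gradient_sub_const]

end Brenier

section Ramp

variable {F : Type*} [NormedAddCommGroup F] [InnerProductSpace ℝ F]

def ramp (e : F) (β : ℝ) (x : F) : ℝ := max (inner ℝ e x - β) 0

variable (e : F) {α β : ℝ}

lemma convexOn_ramp : ConvexOn ℝ univ (ramp e β) :=
  ((innerSL ℝ e).isBoundedLinearMap.toLinearMap.convexOn convex_univ |>.sub
    (concaveOn_const β convex_univ)).sup (convexOn_const 0 convex_univ)

lemma lipschitzWith_ramp : LipschitzWith ‖e‖₊ (ramp e β) := by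
  refine LipschitzWith.of_dist_le_mul fun x y => ?_
  calc dist (ramp e β x) (ramp e β y) ≤ |(inner ℝ e x - β) - (inner ℝ e y - β)| :=
        abs_max_sub_max_le_abs _ _ _
    _ = |inner ℝ e (x - y)| := by rw [inner_sub_right]; ring_nf
    _ ≤ ‖e‖ * ‖x - y‖ := abs_real_inner_le_norm e (x - y)
    _ = ‖e‖₊ * dist x y := by rw [dist_eq_norm]; rfl

lemma abs_ramp_sub_ramp_le (x : F) : |ramp e β x - ramp e α x| ≤ |β - α| := by
  unfold ramp
  calc |max (inner ℝ e x - β) 0 - max (inner ℝ e x - α) 0|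
      ≤ |(inner ℝ e x - β) - (inner ℝ e x - α)| := abs_max_sub_max_le_abs _ _ _
    _ = |β - α| := by rw [← abs_neg]; ring_nf

variable {e}

lemma ramp_sub_ramp_of_le (hαβ : α ≤ β) {x : F} (hx : inner ℝ e x ≤ α) :
    ramp e β x - ramp e α x = 0 := by
  simp only [ramp, max_eq_right (by linarith : inner ℝ e x - β ≤ 0),
    max_eq_right (by linarith : inner ℝ e x - α ≤ 0), sub_self]

lemma ramp_sub_ramp_of_ge (hαβ : α ≤ β) {x : F} (hx : β ≤ inner ℝ e x) :
    ramp e β x - ramp e α x = α - β := by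
  simp only [ramp, max_eq_left (by linarith : 0 ≤ inner ℝ e x - β),
    max_eq_left (by linarith : 0 ≤ inner ℝ e x - α)]
  ring

variable [CompleteSpace F]

lemma norm_gradient_ramp_le (x : F) : ‖gradient (ramp e β) x‖ ≤ ‖e‖ :=
  norm_gradient_le_of_lipschitz (lipschitzWith_ramp e) x

lemma gradient_ramp_of_lt {x : F} (hx : inner ℝ e x < β) : gradient (ramp e β) x = 0 := by
  have : ramp e β =ᶠ[nhds x] fun _ => 0 := by
    filter_upwards [(isOpen_lt (innerSL ℝ e).continuous continuous_const).mem_nhds hx] with y hy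
    exact max_eq_right (sub_nonpos.mpr (le_of_lt hy))
  rw [this.gradient_eq, gradient_fun_const]

lemma gradient_ramp_of_gt {x : F} (hx : β < inner ℝ e x) : gradient (ramp e β) x = e := by
  have : ramp e β =ᶠ[nhds x] fun y => inner ℝ e y - β := by
    filter_upwards [(isOpen_lt continuous_const (innerSL ℝ e).continuous).mem_nhds hx] with y hy
    exact max_eq_left (sub_nonneg.mpr (le_of_lt hy))
  rw [this.gradient_eq]
  exact (hasGradientAt_iff_hasFDerivAt.mpr ((innerSL ℝ e).hasFDerivAt.sub_const β)).gradient

end Ramp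

lemma sq_mul_measureReal_le_integral_sq {X : Type*} [MeasurableSpace X] {ρ : Measure X}
    [IsFiniteMeasure ρ] {g : X → ℝ} (hg : Integrable (fun x => g x ^ 2) ρ) {A : Set X}
    (hA : MeasurableSet A) {δ : ℝ} (hδ : 0 ≤ δ) (hgA : ∀ x ∈ A, δ ≤ |g x|) :
    δ ^ 2 * ρ.real A ≤ ∫ x, g x ^ 2 ∂ρ :=
  calc δ ^ 2 * ρ.real A ≤ ∫ x in A, g x ^ 2 ∂ρ :=
        setIntegral_ge_of_const_le_real hA (measure_ne_top ρ A)
          (fun x hx => by simpa only [sq_abs] using pow_le_pow_left₀ hδ (hgA x hx) 2)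
          hg.integrableOn
    _ ≤ ∫ x, g x ^ 2 ∂ρ := setIntegral_le_integral hg (.of_forall fun _ => sq_nonneg _)

section RampL2

variable {F : Type*} [NormedAddCommGroup F] [InnerProductSpace ℝ F] [MeasurableSpace F]
  [OpensMeasurableSpace F] {ρ : Measure F} [IsFiniteMeasure ρ] {e : F} {α β : ℝ}

lemma integrable_sq_ramp_sub_ramp_sub (c : ℝ) :
    Integrable (fun x => (ramp e β x - ramp e α x - c) ^ 2) ρ := by
  have hcont : Continuous fun x => (ramp e β x - ramp e α x - c) ^ 2 :=
    (((lipschitzWith_ramp e).continuous.sub (lipschitzWith_ramp e).continuous).sub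
      continuous_const).pow 2
  refine .of_bound hcont.aestronglyMeasurable ((|β - α| + |c|) ^ 2) (.of_forall fun x => ?_)
  have h : |ramp e β x - ramp e α x - c| ≤ |β - α| + |c| :=
    (abs_sub _ _).trans (add_le_add_left (abs_ramp_sub_ramp_le e x) _)
  simpa only [Real.norm_eq_abs, abs_pow, sq_abs] using pow_le_pow_left₀ (abs_nonneg _) h 2

lemma sq_mul_min_le_integral_sq_ramp_sub_ramp_sub (hαβ : α ≤ β) (c : ℝ) {A B : Set F}
    (hA : MeasurableSet A) (hB : MeasurableSet B) (hAα : ∀ x ∈ A, inner ℝ e x ≤ α)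
    (hBβ : ∀ x ∈ B, β ≤ inner ℝ e x) :
    ((β - α) / 2) ^ 2 * min (ρ.real A) (ρ.real B) ≤
      ∫ x, (ramp e β x - ramp e α x - c) ^ 2 ∂ρ := by
  have hδ : 0 ≤ (β - α) / 2 := by linarith
  -- the step is `0` on `A` and `α - β` on `B`, and `c` is far from one of these two values
  rcases le_or_gt (-((β - α) / 2)) c with hc | hc
  · refine le_trans (by gcongr; exact min_le_right _ _)
      (sq_mul_measureReal_le_integral_sq (integrable_sq_ramp_sub_ramp_sub c) hB hδ fun x hx => ?_)
    rw [ramp_sub_ramp_of_ge hαβ (hBβ x hx)]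
    exact le_abs.mpr (Or.inr (by linarith))
  · refine le_trans (by gcongr; exact min_le_left _ _)
      (sq_mul_measureReal_le_integral_sq (integrable_sq_ramp_sub_ramp_sub c) hA hδ fun x hx => ?_)
    rw [ramp_sub_ramp_of_le hαβ (hAα x hx)]
    exact le_abs.mpr (Or.inl (by linarith))

end RampL2

section Density

variable {X : Type*} [MeasurableSpace X] {μ : Measure X} {f : X → ℝ} {s : Set X}

lemma ofReal_mul_le_withDensity_ofReal (hs : MeasurableSet s) {m : ℝ} (hm : ∀ x ∈ s, m ≤ f x) :
    ENNReal.ofReal m * μ s ≤ μ.withDensity (fun x => ENNReal.ofReal (f x)) s := by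
  rw [withDensity_apply _ hs, ← setLIntegral_const]
  exact setLIntegral_mono' hs fun x hx => ENNReal.ofReal_le_ofReal (hm x hx)

lemma withDensity_ofReal_le_ofReal_mul (hs : MeasurableSet s) {M : ℝ} (hM : ∀ x ∈ s, f x ≤ M) :
    μ.withDensity (fun x => ENNReal.ofReal (f x)) s ≤ ENNReal.ofReal M * μ s := by
  rw [withDensity_apply _ hs, ← setLIntegral_const]
  exact setLIntegral_mono' hs fun x hx => ENNReal.ofReal_le_ofReal (hM x hx)

lemma withDensity_ofReal_compl_eq_zero (hs : MeasurableSet s) (hf : ∀ x ∉ s, f x = 0) :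
    μ.withDensity (fun x => ENNReal.ofReal (f x)) sᶜ = 0 := by
  simpa using withDensity_ofReal_le_ofReal_mul (μ := μ) hs.compl fun x hx => (hf x hx).le

end Density

lemma exists_pow_sq_lt_mul_pow {r σ K : ℝ} (hr₀ : 0 ≤ r) (hr₁ : r < 1) (hσ : 0 < σ)
    (hK : 0 < K) : ∃ n : ℕ, r ^ (n ^ 2) < K * σ ^ n := by
  obtain ⟨n, hrn, hn⟩ :=
    (((tendsto_pow_atTop_nhds_zero_of_lt_one hr₀ hr₁).eventually
      (gt_mem_nhds (half_pos hσ))).and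
      ((tendsto_pow_atTop_nhds_zero_of_lt_one (by norm_num : (0 : ℝ) ≤ 2⁻¹)
        (by norm_num)).eventually (gt_mem_nhds hK))).exists
  refine ⟨n, ?_⟩
  calc r ^ (n ^ 2) = (r ^ n) ^ n := by rw [sq, pow_mul]
    _ ≤ (σ / 2) ^ n := pow_le_pow_left₀ (pow_nonneg hr₀ n) hrn.le n
    _ = σ ^ n * 2⁻¹ ^ n := by rw [div_eq_mul_inv, mul_pow]
    _ < σ ^ n * K := mul_lt_mul_of_pos_left hn (pow_pos hσ n)
    _ = K * σ ^ n := mul_comm _ _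

namespace BulbChain

def side (n : ℕ) : ℝ := 4⁻¹ ^ n

def start (n : ℕ) : ℝ := 8 / 3 * (1 - 4⁻¹ ^ n)

def neckWidth (n : ℕ) : ℝ := 2⁻¹ ^ (n ^ 2)

lemma side_pos (n : ℕ) : 0 < side n := by unfold side; positivity

lemma side_le_one (n : ℕ) : side n ≤ 1 := pow_le_one₀ (by norm_num) (by norm_num)

lemma side_succ (n : ℕ) : side (n + 1) = side n / 4 := by rw [side, side, pow_succ]; ring

lemma start_succ (n : ℕ) : start (n + 1) = start n + 2 * side n := by
  rw [start, start, side, pow_succ]; ring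

lemma start_nonneg (n : ℕ) : 0 ≤ start n := by
  have := side_le_one n
  unfold side at this; unfold start; linarith

lemma start_lt (n : ℕ) : start n < 8 / 3 := by
  have := side_pos n
  unfold side at this; unfold start; linarith

lemma start_succ_sub (n : ℕ) : start (n + 1) - (start n + side n) = side n := by
  rw [start_succ]; ring

lemma start_add_side_le (n : ℕ) : start n + side n ≤ start (n + 1) := by
  linarith [start_succ n, side_pos n]

lemma start_mono : Monotone start :=
  monotone_nat_of_le_succ fun n => by linarith [start_add_side_le n, side_pos n]

lemma start_add_side_mono : Monotone fun n => start n + side n :=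
  monotone_nat_of_le_succ fun n => by linarith [start_succ n, side_succ n, side_pos n]

lemma start_add_half_side_mono : Monotone fun n => start n + side n / 2 :=
  monotone_nat_of_le_succ fun n => by linarith [start_succ n, side_succ n, side_pos n]

lemma neckWidth_pos (n : ℕ) : 0 < neckWidth n := by unfold neckWidth; positivity

lemma neckWidth_le_one (n : ℕ) : neckWidth n ≤ 1 := pow_le_one₀ (by norm_num) (by norm_num)

lemma exists_index_lt {d : ℕ} (hd : 2 ≤ d) {C q p m M : ℝ} (hC : 0 < C) (hq : 0 < q)
    (hp : 0 < p) (hm : 0 < m) (hM : 0 < M) :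
    ∃ n, (C * (2 * (M * (side n * neckWidth n ^ (d - 1))) ^ (1 / p)) ^ q) ^ 2 <
      (side n / 2) ^ 2 * (m * side (n + 1) ^ d) := by
  set r : ℝ := 2⁻¹ ^ (q / p)
  set K : ℝ := C * 2 ^ q * M ^ (q / p)
  have hr₀ : 0 < r := by positivity
  have hr₁ : r < 1 := Real.rpow_lt_one (by norm_num) (by norm_num) (by positivity)
  have hK : 0 < K := by positivity
  obtain ⟨n, hn⟩ := exists_pow_sq_lt_mul_pow (pow_nonneg hr₀.le 2)
    (pow_lt_one₀ hr₀.le hr₁ two_ne_zero) (by positivity : (0 : ℝ) < (4⁻¹ : ℝ) ^ d * 16⁻¹)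
    (by positivity : 0 < m / 4 * 4⁻¹ ^ d / K ^ 2)
  refine ⟨n, ?_⟩
  have := side_pos n
  have := neckWidth_pos n
  have hV : side n * neckWidth n ^ (d - 1) ≤ neckWidth n :=
    calc side n * neckWidth n ^ (d - 1) ≤ neckWidth n ^ (d - 1) :=
          mul_le_of_le_one_left (by positivity) (side_le_one n)
      _ ≤ neckWidth n := pow_le_of_le_one (by positivity) (neckWidth_le_one n) (by omega)
  have hneck : (2 * (M * neckWidth n) ^ (1 / p)) ^ q = 2 ^ q * M ^ (q / p) * r ^ (n ^ 2) := by
    rw [Real.mul_rpow (by norm_num) (by positivity), ← Real.rpow_mul (by positivity),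
      Real.mul_rpow hM.le (by positivity), neckWidth, ← Real.rpow_pow_comm (by norm_num),
      one_div_mul_eq_div]
    exact (mul_assoc _ _ _).symm
  have hlhs : C * (2 * (M * (side n * neckWidth n ^ (d - 1))) ^ (1 / p)) ^ q ≤ K * r ^ (n ^ 2) :=
    calc C * (2 * (M * (side n * neckWidth n ^ (d - 1))) ^ (1 / p)) ^ q
        ≤ C * (2 * (M * neckWidth n) ^ (1 / p)) ^ q := by gcongr
      _ = K * r ^ (n ^ 2) := by rw [hneck]; ring
  calc (C * (2 * (M * (side n * neckWidth n ^ (d - 1))) ^ (1 / p)) ^ q) ^ 2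
      ≤ (K * r ^ (n ^ 2)) ^ 2 := pow_le_pow_left₀ (by positivity) hlhs 2
    _ = K ^ 2 * (r ^ 2) ^ (n ^ 2) := by ring
    _ < K ^ 2 * (m / 4 * 4⁻¹ ^ d / K ^ 2 * ((4⁻¹ : ℝ) ^ d * 16⁻¹) ^ n) := by gcongr
    _ = m / 4 * 4⁻¹ ^ d * (4⁻¹ ^ d * 16⁻¹) ^ n := by field_simp
    _ = (side n / 2) ^ 2 * (m * side (n + 1) ^ d) := by
        rw [side, side, div_pow, ← pow_mul, mul_comm n 2, pow_mul,
          show (4⁻¹ : ℝ) ^ 2 = 16⁻¹ by norm_num]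
        ring

variable {d : ℕ} [NeZero d]

def box (I J : Set ℝ) : Set (EuclideanSpace ℝ (Fin d)) :=
  WithLp.ofLp ⁻¹' univ.pi (update (fun _ => J) 0 I)

lemma forall_update_const_of {P : Set ℝ → Prop} {I J : Set ℝ} (hI : P I) (hJ : P J) (i : Fin d) :
    P (update (fun _ => J) 0 I i) :=
  (forall_update_iff _ fun _ s => P s).mpr ⟨hI, fun _ _ => hJ⟩ i

lemma mem_box {I J : Set ℝ} {x : EuclideanSpace ℝ (Fin d)} :
    x ∈ box I J ↔ x 0 ∈ I ∧ ∀ i ≠ 0, x i ∈ J := by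
  simp only [box, mem_preimage, mem_univ_pi]
  exact forall_update_iff _ fun i s => x i ∈ s

lemma box_mono {I I' J J' : Set ℝ} (hI : I ⊆ I') (hJ : J ⊆ J') :
    (box I J : Set (EuclideanSpace ℝ (Fin d))) ⊆ box I' J' := fun _ hx =>
  mem_box.mpr ⟨hI (mem_box.mp hx).1, fun i hi => hJ ((mem_box.mp hx).2 i hi)⟩

lemma single_mem_box {I J : Set ℝ} {t : ℝ} (ht : t ∈ I) (hJ : 0 ∈ J) :
    EuclideanSpace.single (0 : Fin d) t ∈ box I J :=
  mem_box.mpr ⟨by simpa using ht, fun i hi => by simpa [hi] using hJ⟩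

lemma isOpen_box {I J : Set ℝ} (hI : IsOpen I) (hJ : IsOpen J) :
    IsOpen (box I J : Set (EuclideanSpace ℝ (Fin d))) :=
  (isOpen_set_pi finite_univ fun i _ => forall_update_const_of hI hJ i).preimage
    (PiLp.continuous_ofLp 2 _)

lemma measurableSet_box {I J : Set ℝ} (hI : MeasurableSet I) (hJ : MeasurableSet J) :
    MeasurableSet (box I J : Set (EuclideanSpace ℝ (Fin d))) :=
  (MeasurableSet.univ_pi (forall_update_const_of hI hJ)).preimage
    (PiLp.continuous_ofLp 2 _).measurable

lemma convex_box {I J : Set ℝ} (hI : Convex ℝ I) (hJ : Convex ℝ J) :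
    Convex ℝ (box I J : Set (EuclideanSpace ℝ (Fin d))) :=
  (convex_pi fun i _ => forall_update_const_of hI hJ i).linear_preimage
    (WithLp.linearEquiv 2 ℝ (Fin d → ℝ)).toLinearMap

lemma isBounded_box {I J : Set ℝ} (hI : Bornology.IsBounded I) (hJ : Bornology.IsBounded J) :
    Bornology.IsBounded (box I J : Set (EuclideanSpace ℝ (Fin d))) :=
  (PiLp.antilipschitzWith_ofLp 2 _).isBounded_preimage
    (Bornology.IsBounded.pi (forall_update_const_of hI hJ))

lemma volume_box (I J : Set ℝ) :
    volume (box I J : Set (EuclideanSpace ℝ (Fin d))) = volume I * volume J ^ (d - 1) := by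
  change volume ((MeasurableEquiv.toLp 2 (Fin d → ℝ)).symm ⁻¹' _) = _
  rw [(EuclideanSpace.volume_preserving_symm_measurableEquiv_toLp _).measure_preimage_equiv,
    volume_pi_pi, ← Finset.mul_prod_erase _ _ (Finset.mem_univ 0), update_self,
    Finset.prod_congr rfl fun i hi => by rw [update_of_ne (Finset.ne_of_mem_erase hi)],
    Finset.prod_const, Finset.card_erase_of_mem (Finset.mem_univ 0), Finset.card_univ,
    Fintype.card_fin]

def bulb (n : ℕ) : Set (EuclideanSpace ℝ (Fin d)) :=
  box (Ioo (start n) (start n + side n)) (Ioo (-(side n / 2)) (side n / 2))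

def neck (n : ℕ) : Set (EuclideanSpace ℝ (Fin d)) :=
  box (Ioo (start n + side n / 2) (start (n + 1) + side (n + 1) / 2))
    (Ioo (-(neckWidth n / 2)) (neckWidth n / 2))

variable (d) in
def chain : Set (EuclideanSpace ℝ (Fin d)) := ⋃ n, bulb n ∪ neck n

def slab (n : ℕ) : Set (EuclideanSpace ℝ (Fin d)) :=
  (fun x => x 0) ⁻¹' Icc (start n + side n) (start (n + 1))

lemma single_mem_bulb {n : ℕ} {t : ℝ} (ht : t ∈ Ioo (start n) (start n + side n)) :
    EuclideanSpace.single (0 : Fin d) t ∈ bulb n :=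
  single_mem_box ht (by simp [side_pos n])

lemma single_mem_neck {n : ℕ} {t : ℝ}
    (ht : t ∈ Ioo (start n + side n / 2) (start (n + 1) + side (n + 1) / 2)) :
    EuclideanSpace.single (0 : Fin d) t ∈ neck n :=
  single_mem_box ht (by simp [neckWidth_pos n])

lemma measurableSet_bulb (n : ℕ) : MeasurableSet (bulb n : Set (EuclideanSpace ℝ (Fin d))) :=
  measurableSet_box measurableSet_Ioo measurableSet_Ioo

lemma measurableSet_slab (n : ℕ) : MeasurableSet (slab n : Set (EuclideanSpace ℝ (Fin d))) :=
  measurableSet_Icc.preimage (PiLp.continuous_apply 2 _ 0).measurable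

lemma isOpen_chain : IsOpen (chain d) :=
  isOpen_iUnion fun _ =>
    (isOpen_box isOpen_Ioo isOpen_Ioo).union (isOpen_box isOpen_Ioo isOpen_Ioo)

lemma measurableSet_chain : MeasurableSet (chain d) := isOpen_chain.measurableSet

lemma isBounded_chain : Bornology.IsBounded (chain d) := by
  refine (isBounded_box (I := Icc 0 3) (J := Icc (-1) 1) (Metric.isBounded_Icc _ _)
    (Metric.isBounded_Icc _ _)).subset (iUnion_subset fun n => union_subset ?_ ?_)
  all_goals
    refine box_mono (Ioo_subset_Icc_self.trans (Icc_subset_Icc ?_ ?_))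
      (Ioo_subset_Icc_self.trans (Icc_subset_Icc ?_ ?_))
  all_goals linarith [start_nonneg n, start_lt (n + 2), start_add_side_le n,
    start_add_side_le (n + 1), side_pos n, side_le_one n, side_pos (n + 1),
    neckWidth_pos n, neckWidth_le_one n]

lemma isConnected_chain : IsConnected (chain d) := by
  have hb : ∀ n, Convex ℝ (bulb n : Set (EuclideanSpace ℝ (Fin d))) := fun n =>
    convex_box (convex_Ioo _ _) (convex_Ioo _ _)
  have hn : ∀ n, Convex ℝ (neck n : Set (EuclideanSpace ℝ (Fin d))) := fun n =>
    convex_box (convex_Ioo _ _) (convex_Ioo _ _)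
  have hbn : ∀ n, EuclideanSpace.single (0 : Fin d) (start n + 3 / 4 * side n) ∈
      bulb n ∩ neck n := fun n => by
    have := side_pos n; have := side_pos (n + 1); have := start_succ n
    exact ⟨single_mem_bulb ⟨by linarith, by linarith⟩, single_mem_neck ⟨by linarith, by linarith⟩⟩
  have hnb : ∀ n, EuclideanSpace.single (0 : Fin d) (start (n + 1) + side (n + 1) / 4) ∈
      neck n ∩ bulb (n + 1) := fun n => by
    have := side_pos n; have := side_pos (n + 1); have := start_succ n
    exact ⟨single_mem_neck ⟨by linarith, by linarith⟩, single_mem_bulb ⟨by linarith, by linarith⟩⟩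
  refine IsConnected.iUnion_of_chain
    (s := fun n => (bulb n ∪ neck n : Set (EuclideanSpace ℝ (Fin d)))) (fun n => ?_) fun n => ?_
  · exact ((hb n).isConnected ⟨_, (hbn n).1⟩).union ⟨_, hbn n⟩
      ((hn n).isConnected ⟨_, (hbn n).2⟩)
  · rw [Order.succ_eq_add_one]
    exact ⟨_, Or.inr (hnb n).1, Or.inl (hnb n).2⟩

lemma isPathConnected_chain : IsPathConnected (chain d) :=
  (isOpen_chain.isConnected_iff_isPathConnected).mp isConnected_chain

lemma slab_inter_chain_subset (n : ℕ) :
    slab n ∩ chain d ⊆ box (Icc (start n + side n) (start (n + 1)))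
      (Icc (-(neckWidth n / 2)) (neckWidth n / 2)) := by
  rintro x ⟨⟨hx₁, hx₂⟩, hx⟩
  obtain ⟨k, hk | hk⟩ := mem_iUnion.mp hx <;> obtain ⟨hk₀, hkJ⟩ := mem_box.mp hk
  · exfalso
    rcases le_or_gt k n with hkn | hkn
    · linarith [hk₀.2, start_add_side_mono hkn]
    · linarith [hk₀.1, start_mono (Nat.succ_le_of_lt hkn)]
  · rcases lt_trichotomy k n with hkn | rfl | hkn
    · linarith [hk₀.2, start_add_half_side_mono (Nat.succ_le_of_lt hkn), side_pos n]
    · exact mem_box.mpr ⟨⟨hx₁, hx₂⟩, fun i hi => Ioo_subset_Icc_self (hkJ i hi)⟩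
    · linarith [hk₀.1, start_add_half_side_mono (Nat.succ_le_of_lt hkn), side_pos (n + 1)]

lemma volume_bulb (n : ℕ) :
    volume (bulb n : Set (EuclideanSpace ℝ (Fin d))) = ENNReal.ofReal (side n ^ d) := by
  rw [bulb, volume_box, Real.volume_Ioo, Real.volume_Ioo, add_sub_cancel_left, sub_neg_eq_add,
    add_halves, ← ENNReal.ofReal_pow (side_pos n).le, ← ENNReal.ofReal_mul (side_pos n).le,
    ← pow_succ', Nat.sub_add_cancel NeZero.one_le]

variable {f : EuclideanSpace ℝ (Fin d) → ℝ}

lemma measureReal_bulb_ge [IsFiniteMeasure (volume.withDensity fun x => ENNReal.ofReal (f x))]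
    {m : ℝ} (hm : ∀ x ∈ chain d, m ≤ f x) (n : ℕ) :
    m * side n ^ d ≤ (volume.withDensity fun x => ENNReal.ofReal (f x)).real (bulb n) := by
  refine (ENNReal.ofReal_le_iff_le_toReal (measure_ne_top _ _)).mp ?_
  rw [ENNReal.ofReal_mul' (by have := side_pos n; positivity), ← volume_bulb]
  exact ofReal_mul_le_withDensity_ofReal (measurableSet_bulb n) fun x hx =>
    hm x (mem_iUnion.mpr ⟨n, Or.inl hx⟩)

lemma measureReal_slab_le {M : ℝ} (hM₀ : 0 ≤ M) (hM : ∀ x ∈ chain d, f x ≤ M)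
    (hout : ∀ x ∉ chain d, f x = 0) (n : ℕ) :
    (volume.withDensity fun x => ENNReal.ofReal (f x)).real (slab n) ≤
      M * (side n * neckWidth n ^ (d - 1)) := by
  have hV : 0 ≤ side n * neckWidth n ^ (d - 1) := by
    have := side_pos n; have := neckWidth_pos n; positivity
  refine ENNReal.toReal_le_of_le_ofReal (mul_nonneg hM₀ hV) ?_
  calc (volume.withDensity fun x => ENNReal.ofReal (f x)) (slab n)
      = (volume.withDensity fun x => ENNReal.ofReal (f x)) (slab n ∩ chain d) :=
        (measure_inter_conull (withDensity_ofReal_compl_eq_zero measurableSet_chain hout)).symm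
    _ ≤ ENNReal.ofReal M * volume (slab n ∩ chain d) :=
        withDensity_ofReal_le_ofReal_mul ((measurableSet_slab n).inter measurableSet_chain)
          fun x hx => hM x hx.2
    _ ≤ ENNReal.ofReal M * volume (box (Icc (start n + side n) (start (n + 1)))
          (Icc (-(neckWidth n / 2)) (neckWidth n / 2)) : Set (EuclideanSpace ℝ (Fin d))) := by
        gcongr
        exact slab_inter_chain_subset n
    _ = ENNReal.ofReal (M * (side n * neckWidth n ^ (d - 1))) := by
        rw [volume_box, Real.volume_Icc, Real.volume_Icc, start_succ_sub, sub_neg_eq_add,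
          add_halves, ENNReal.ofReal_mul' hV, ENNReal.ofReal_mul (side_pos n).le,
          ENNReal.ofReal_pow (neckWidth_pos n).le]

lemma inner_single_zero_one (x : EuclideanSpace ℝ (Fin d)) :
    inner ℝ (EuclideanSpace.single (0 : Fin d) (1 : ℝ)) x = x 0 := by
  simp [EuclideanSpace.inner_single_left]

local notation "e₀" => EuclideanSpace.single (0 : Fin d) (1 : ℝ)

lemma norm_gradient_ramp_single_le (β : ℝ) (x : EuclideanSpace ℝ (Fin d)) :
    ‖gradient (ramp e₀ β) x‖ ≤ 1 := by
  simpa using norm_gradient_ramp_le (e := e₀) (β := β) x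

lemma Wp_map_gradient_ramp_le {p : ℝ} (hp : 0 < p) {ρ : Measure (EuclideanSpace ℝ (Fin d))}
    [IsProbabilityMeasure ρ] {n : ℕ} {V : ℝ} (hV : ρ.real (slab n) ≤ V) :
    Wp p (ρ.map (gradient (ramp e₀ (start (n + 1)))))
      (ρ.map (gradient (ramp e₀ (start n + side n)))) ≤ 2 * V ^ (1 / p) := by
  refine (Wp_map_le_of_eqOn_compl hp (measurable_gradient _) (measurable_gradient _) zero_le_two
    (fun x => ?_) (measurableSet_slab n) (fun x hx => ?_)).trans ?_
  · linarith [dist_le_norm_add_norm (gradient (ramp e₀ (start (n + 1))) x)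
      (gradient (ramp e₀ (start n + side n)) x), norm_gradient_ramp_single_le (start (n + 1)) x,
      norm_gradient_ramp_single_le (start n + side n) x]
  · have hαβ := start_add_side_le n
    simp only [slab, mem_preimage, mem_Icc, not_and_or, not_le] at hx
    rcases hx with hx | hx
    · rw [gradient_ramp_of_lt (by rw [inner_single_zero_one]; linarith),
        gradient_ramp_of_lt (by rw [inner_single_zero_one]; linarith)]
    · rw [gradient_ramp_of_gt (by rw [inner_single_zero_one]; linarith),
        gradient_ramp_of_gt (by rw [inner_single_zero_one]; linarith)]
  · gcongr

lemma sq_mul_le_integral_sq_ramp_sub_ramp_sub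
    [IsFiniteMeasure (volume.withDensity fun x => ENNReal.ofReal (f x))]
    {m : ℝ} (hm₀ : 0 ≤ m) (hm : ∀ x ∈ chain d, m ≤ f x) (n : ℕ) (c : ℝ) :
    (side n / 2) ^ 2 * (m * side (n + 1) ^ d) ≤
      ∫ x, (ramp e₀ (start (n + 1)) x - ramp e₀ (start n + side n) x - c) ^ 2
        ∂(volume.withDensity fun x => ENNReal.ofReal (f x)) := by
  have hmin : m * side (n + 1) ^ d ≤
      min ((volume.withDensity fun x => ENNReal.ofReal (f x)).real (bulb 0))
        ((volume.withDensity fun x => ENNReal.ofReal (f x)).real (bulb (n + 1))) := by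
    refine le_min (le_trans ?_ (measureReal_bulb_ge hm 0)) (measureReal_bulb_ge hm (n + 1))
    rw [show side 0 = 1 from pow_zero _, one_pow, mul_one]
    exact mul_le_of_le_one_right hm₀ (pow_le_one₀ (side_pos _).le (side_le_one _))
  have hL2 := sq_mul_min_le_integral_sq_ramp_sub_ramp_sub (start_add_side_le n) c
    (measurableSet_bulb 0) (measurableSet_bulb (n + 1)) (e := e₀)
    (ρ := volume.withDensity fun x => ENNReal.ofReal (f x))
    (fun x hx => by
      rw [inner_single_zero_one]
      linarith [(mem_box.mp hx).1.2, start_add_side_mono (Nat.zero_le n)])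
    (fun x hx => by rw [inner_single_zero_one]; exact (mem_box.mp hx).1.1.le)
  rw [start_succ_sub] at hL2
  exact (mul_le_mul_of_nonneg_left hmin (sq_nonneg _)).trans hL2

end BulbChain

open BulbChain in
theorem no_holder_potential_stability
    (d : ℕ) (hd : 2 ≤ d) :
    ∃ X : Set (EuclideanSpace ℝ (Fin d)),
      X.Nonempty ∧ Bornology.IsBounded X ∧ IsPathConnected X ∧ IsOpen X ∧
      ∀ (ρ : Measure (EuclideanSpace ℝ (Fin d))) (f : EuclideanSpace ℝ (Fin d) → ℝ)
        (m M : ℝ), 0 < m →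
        ρ = volume.withDensity (fun x => ENNReal.ofReal (f x)) →
        IsProbabilityMeasure ρ →
        (∀ x ∈ X, m ≤ f x ∧ f x ≤ M) → (∀ x ∉ X, f x = 0) →
        ∀ C : ℝ, 0 < C → ∀ q : ℝ, 0 < q → ∀ p : ℝ, 1 ≤ p →
          ∃ (μ ν : Measure (EuclideanSpace ℝ (Fin d)))
            (φμ φν : EuclideanSpace ℝ (Fin d) → ℝ),
            IsProbabilityMeasure μ ∧ IsProbabilityMeasure ν ∧
            μ (Metric.closedBall (0 : EuclideanSpace ℝ (Fin d)) 1)ᶜ = 0 ∧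
            ν (Metric.closedBall (0 : EuclideanSpace ℝ (Fin d)) 1)ᶜ = 0 ∧
            IsBrenierPotential ρ μ φμ ∧ IsBrenierPotential ρ ν φν ∧
            C * Wp p μ ν ^ q < Real.sqrt (∫ x, (φμ x - φν x) ^ 2 ∂ρ) := by
  have : NeZero d := ⟨by omega⟩
  refine ⟨chain d, isConnected_chain.nonempty, isBounded_chain, isPathConnected_chain,
    isOpen_chain, ?_⟩
  rintro ρ f m M hm rfl hρ hf hout C hC q hq p hp
  obtain ⟨x₀, hx₀⟩ := (isConnected_chain (d := d)).nonempty
  have hM : 0 < M := hm.trans_le ((hf x₀ hx₀).1.trans (hf x₀ hx₀).2)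
  obtain ⟨n, hn⟩ := exists_index_lt hd hC hq (p := p) (by linarith) hm hM
  set ρ := volume.withDensity fun x => ENNReal.ofReal (f x)
  set e := EuclideanSpace.single (0 : Fin d) (1 : ℝ)
  refine ⟨_, _, _, _, Measure.isProbabilityMeasure_map (measurable_gradient _).aemeasurable,
    Measure.isProbabilityMeasure_map (measurable_gradient _).aemeasurable,
    map_closedBall_compl_eq_zero (measurable_gradient _) (norm_gradient_ramp_single_le _),
    map_closedBall_compl_eq_zero (measurable_gradient _) (norm_gradient_ramp_single_le _),
    isBrenierPotential_sub_integral (convexOn_ramp e) (lipschitzWith_ramp e (β := start (n + 1))),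
    isBrenierPotential_sub_integral (convexOn_ramp e)
      (lipschitzWith_ramp e (β := start n + side n)),
    (Real.lt_sqrt (mul_nonneg hC.le (Real.rpow_nonneg (Wp_nonneg _ _) q))).mpr ?_⟩
  calc (C * Wp p _ _ ^ q) ^ 2
      ≤ (C * (2 * (M * (side n * neckWidth n ^ (d - 1))) ^ (1 / p)) ^ q) ^ 2 := by
        have := Wp_nonneg (p := p) (ρ.map (gradient (ramp e (start (n + 1)))))
          (ρ.map (gradient (ramp e (start n + side n))))
        gcongr
        exact Wp_map_gradient_ramp_le (by linarith)
          (measureReal_slab_le hM.le (fun x hx => (hf x hx).2) hout n)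
    _ < (side n / 2) ^ 2 * (m * side (n + 1) ^ d) := hn
    _ ≤ ∫ x, (ramp e (start (n + 1)) x - ramp e (start n + side n) x -
          ((∫ y, ramp e (start (n + 1)) y ∂ρ) - ∫ y, ramp e (start n + side n) y ∂ρ)) ^ 2 ∂ρ :=
        sq_mul_le_integral_sq_ramp_sub_ramp_sub hm.le (fun x hx => (hf x hx).1) n _
    _ = _ := by congr! 3 with x; ring
end
end

section
/- Let V be a finite nonempty set, let δ : V → (0,∞), and let w : V × V → [0,∞) be symmetric with w(i,i) = 0 for all i. Let C > 0 satisfy C·δ_i ≥ Σ_{j∈V} w_{ij} for all i ∈ V. For U ⊆ V define vol(U) = Σ_{i∈U} δ_i and |∂U| = Σ_{i∈U, j∉U} w_{ij}, and let h be the infimum of |∂U|/vol(U) over all U ⊆ V with 0 < vol(U) ≤ vol(V)/2. Then the Cheeger inequality λ₂(L) ≥ h²/(2C) holds; explicitly, for every u : V → ℝ with Σ_{i∈V} δ_i·u_i = 0, one has (1/2)·Σ_{i,j∈V} w_{ij}·(u_i − u_j)² ≥ (h²/(2C))·Σ_{i∈V} δ_i·u_i². -/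
open scoped Classical

open Finset

lemma cheeger_coarea (V : Type) [Fintype V]
    (δ : V → ℝ) (w : V → V → ℝ) (hw : ∀ i j, 0 ≤ w i j) (hsymm : ∀ i j, w i j = w j i)
    (h : ℝ) (n : ℕ) :
    ∀ f : V → ℝ, (∀ i, 0 ≤ f i) →
      (Finset.univ.filter (fun i => 0 < f i)).card ≤ n →
      (∀ t : ℝ, 0 < t → (Finset.univ.filter (fun i => t ≤ f i)).Nonempty →
        h * ∑ i ∈ Finset.univ.filter (fun i => t ≤ f i), δ i ≤
          ∑ i ∈ Finset.univ.filter (fun i => t ≤ f i),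
            ∑ j ∈ Finset.univ \ Finset.univ.filter (fun i => t ≤ f i), w i j) →
      2 * h * ∑ i, δ i * f i ≤ ∑ i, ∑ j, w i j * |f i - f j| := by
  induction n with
  | zero =>
    intro f hf hcard _
    have hz : ∀ i, f i = 0 := by
      intro i
      by_contra hne
      have hpos : 0 < f i := lt_of_le_of_ne (hf i) (Ne.symm hne)
      have : i ∈ Finset.univ.filter (fun i => 0 < f i) := by simp [hpos]
      have := Finset.card_pos.2 ⟨i, this⟩
      omega
    simp [hz]
  | succ n ih =>
    intro f hf hcard hlev
    by_cases hU : (Finset.univ.filter (fun i => 0 < f i)).Nonempty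
    case neg =>
      have hz : ∀ i, f i = 0 := by
        intro i
        by_contra hne
        exact hU ⟨i, by simp [lt_of_le_of_ne (hf i) (Ne.symm hne)]⟩
      simp [hz]
    set U := Finset.univ.filter (fun i => 0 < f i) with hUdef
    obtain ⟨i₀, hi₀, hmin⟩ := U.exists_min_image f hU
    set m := f i₀ with hmdef
    have hm : 0 < m := (Finset.mem_filter.1 hi₀).2
    set f' : V → ℝ := fun i => max (f i - m) 0 with hf'def
    have hf' : ∀ i, 0 ≤ f' i := fun i => le_max_right _ _
    have hmemU : ∀ i, i ∈ U ↔ 0 < f i := by intro i; simp [hUdef]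
    have hfi : ∀ i, i ∈ U → f i = f' i + m := by
      intro i hi
      have : m ≤ f i := hmin i hi
      simp only [hf'def]
      rw [max_eq_left (by linarith : (0:ℝ) ≤ f i - m)]
      ring
    have hfo : ∀ i, i ∉ U → f i = 0 ∧ f' i = 0 := by
      intro i hi
      have h0 : f i = 0 := by
        by_contra hne
        exact hi ((hmemU i).2 (lt_of_le_of_ne (hf i) (Ne.symm hne)))
      constructor
      · exact h0
      · simp [hf'def, h0, max_eq_right (by linarith : f i - m ≤ 0)]
    -- card bound for f'
    have hcard' : (Finset.univ.filter (fun i => 0 < f' i)).card ≤ n := by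
      have hsub : Finset.univ.filter (fun i => 0 < f' i) ⊆ U.erase i₀ := by
        intro i hi
        have hpos : 0 < f' i := (Finset.mem_filter.1 hi).2
        have hgt : m < f i := by
          have := lt_max_iff.1 hpos
          rcases this with h1 | h1
          · linarith
          · exact absurd h1 (lt_irrefl 0)
        refine Finset.mem_erase.2 ⟨?_, (hmemU i).2 (lt_trans hm hgt)⟩
        intro hii
        rw [hii] at hgt
        exact lt_irrefl _ hgt
      calc (Finset.univ.filter (fun i => 0 < f' i)).card ≤ (U.erase i₀).card :=
            Finset.card_le_card hsub
        _ = U.card - 1 := Finset.card_erase_of_mem hi₀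
        _ ≤ n := by omega
    -- level sets of f'
    have hlevset : ∀ t : ℝ, 0 < t →
        Finset.univ.filter (fun i => t ≤ f' i) = Finset.univ.filter (fun i => t + m ≤ f i) := by
      intro t ht
      ext i
      simp only [Finset.mem_filter, Finset.mem_univ, true_and]
      constructor
      · intro hle
        rcases le_max_iff.1 hle with h1 | h1
        · linarith
        · linarith
      · intro hle
        exact le_max_iff.2 (Or.inl (by linarith))
    have hlev' : ∀ t : ℝ, 0 < t → (Finset.univ.filter (fun i => t ≤ f' i)).Nonempty →
        h * ∑ i ∈ Finset.univ.filter (fun i => t ≤ f' i), δ i ≤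
          ∑ i ∈ Finset.univ.filter (fun i => t ≤ f' i),
            ∑ j ∈ Finset.univ \ Finset.univ.filter (fun i => t ≤ f' i), w i j := by
      intro t ht hne
      rw [hlevset t ht] at hne ⊢
      exact hlev (t + m) (by linarith) hne
    have IH := ih f' hf' hcard' hlev'
    -- U is the level set at m
    have hUlev : Finset.univ.filter (fun i => m ≤ f i) = U := by
      ext i
      simp only [Finset.mem_filter, Finset.mem_univ, true_and, hUdef]
      exact ⟨fun hle => lt_of_lt_of_le hm hle, fun hpos => hmin i ((hmemU i).2 hpos)⟩
    have hlevm := hlev m hm (by rw [hUlev]; exact hU)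
    rw [hUlev] at hlevm
    -- identity (1)
    have id1 : ∑ i, δ i * f i = (∑ i, δ i * f' i) + m * ∑ i ∈ U, δ i := by
      have pt : ∀ i, δ i * f i = δ i * f' i + (if i ∈ U then m * δ i else 0) := by
        intro i
        by_cases hi : i ∈ U
        · rw [if_pos hi, hfi i hi]; ring
        · obtain ⟨h1, h2⟩ := hfo i hi
          rw [if_neg hi, h1, h2]; ring
      calc ∑ i, δ i * f i
          = ∑ i, (δ i * f' i + if i ∈ U then m * δ i else 0) :=
            Finset.sum_congr rfl (fun i _ => pt i)
        _ = (∑ i, δ i * f' i) + ∑ i, (if i ∈ U then m * δ i else 0) :=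
            Finset.sum_add_distrib
        _ = (∑ i, δ i * f' i) + m * ∑ i ∈ U, δ i := by
            rw [Finset.sum_ite_mem, Finset.univ_inter, Finset.mul_sum]
    -- identity (2)
    have id2 : ∑ i, ∑ j, w i j * |f i - f j|
        = (∑ i, ∑ j, w i j * |f' i - f' j|)
          + 2 * m * ∑ i ∈ U, ∑ j ∈ Finset.univ \ U, w i j := by
      have ptwise : ∀ i j, w i j * |f i - f j|
          = w i j * |f' i - f' j|
            + m * ((if i ∈ U ∧ j ∉ U then w i j else 0) + (if j ∈ U ∧ i ∉ U then w i j else 0)) := by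
        intro i j
        by_cases hi : i ∈ U <;> by_cases hj : j ∈ U
        · rw [hfi i hi, hfi j hj]
          simp [hi, hj]
        · obtain ⟨hj1, hj2⟩ := hfo j hj
          rw [hfi i hi, hj1, hj2]
          rw [if_pos ⟨hi, hj⟩, if_neg (fun hc => hj hc.1)]
          rw [sub_zero, sub_zero, abs_of_nonneg (by linarith [hf' i] : (0:ℝ) ≤ f' i + m),
            abs_of_nonneg (hf' i)]
          ring
        · obtain ⟨hi1, hi2⟩ := hfo i hi
          rw [hfi j hj, hi1, hi2]
          rw [if_neg (fun hc => hi hc.1), if_pos ⟨hj, hi⟩]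
          rw [zero_sub, zero_sub, abs_neg, abs_neg,
            abs_of_nonneg (by linarith [hf' j] : (0:ℝ) ≤ f' j + m), abs_of_nonneg (hf' j)]
          ring
        · obtain ⟨hi1, hi2⟩ := hfo i hi
          obtain ⟨hj1, hj2⟩ := hfo j hj
          rw [hi1, hi2, hj1, hj2]
          simp [hi, hj]
      have aux : ∀ g : V → V → ℝ,
          ∑ i, ∑ j, (if i ∈ U ∧ j ∉ U then g i j else 0)
            = ∑ i ∈ U, ∑ j ∈ Finset.univ \ U, g i j := by
        intro g
        have hset : Finset.univ \ U = Finset.univ.filter (fun j => j ∉ U) := by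
          ext j; simp
        have inner : ∀ i, ∑ j, (if i ∈ U ∧ j ∉ U then g i j else 0)
            = if i ∈ U then ∑ j ∈ Finset.univ \ U, g i j else 0 := by
          intro i
          by_cases hi : i ∈ U
          · rw [if_pos hi]
            simp only [hi, true_and]
            rw [hset, Finset.sum_filter]
          · rw [if_neg hi]
            simp [hi]
        rw [Finset.sum_congr rfl (fun i _ => inner i), Finset.sum_ite_mem, Finset.univ_inter]
      have sum1 : ∑ i, ∑ j, (if i ∈ U ∧ j ∉ U then w i j else 0)
          = ∑ i ∈ U, ∑ j ∈ Finset.univ \ U, w i j := aux w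
      have sum2 : ∑ i, ∑ j, (if j ∈ U ∧ i ∉ U then w i j else 0)
          = ∑ i ∈ U, ∑ j ∈ Finset.univ \ U, w i j := by
        rw [Finset.sum_comm]
        rw [aux (fun a b => w b a)]
        exact Finset.sum_congr rfl (fun i _ => Finset.sum_congr rfl (fun j _ => hsymm j i))
      calc ∑ i, ∑ j, w i j * |f i - f j|
          = ∑ i, ∑ j, (w i j * |f' i - f' j|
              + m * ((if i ∈ U ∧ j ∉ U then w i j else 0) + (if j ∈ U ∧ i ∉ U then w i j else 0))) :=
            Finset.sum_congr rfl (fun i _ => Finset.sum_congr rfl (fun j _ => ptwise i j))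
        _ = (∑ i, ∑ j, w i j * |f' i - f' j|)
              + m * ((∑ i, ∑ j, (if i ∈ U ∧ j ∉ U then w i j else 0))
                + ∑ i, ∑ j, (if j ∈ U ∧ i ∉ U then w i j else 0)) := by
            simp only [Finset.sum_add_distrib, mul_add, Finset.mul_sum]
        _ = _ := by rw [sum1, sum2]; ring
    -- combine
    rw [id1, id2]
    have hstep : 2 * h * (m * ∑ i ∈ U, δ i) ≤ 2 * m * ∑ i ∈ U, ∑ j ∈ Finset.univ \ U, w i j := by
      have := mul_le_mul_of_nonneg_left hlevm (by linarith : (0:ℝ) ≤ 2 * m)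
      calc 2 * h * (m * ∑ i ∈ U, δ i) = 2 * m * (h * ∑ i ∈ U, δ i) := by ring
        _ ≤ 2 * m * ∑ i ∈ U, ∑ j ∈ Finset.univ \ U, w i j := this
    linarith [IH]

lemma cheeger_part (V : Type) [Fintype V]
    (δ : V → ℝ) (hδ : ∀ i, 0 < δ i)
    (w : V → V → ℝ) (hw : ∀ i j, 0 ≤ w i j) (hsymm : ∀ i j, w i j = w j i)
    (C : ℝ) (hC : 0 < C) (hCdeg : ∀ i, (∑ j, w i j) ≤ C * δ i)
    (h : ℝ) (h0 : 0 ≤ h)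
    (hUb : ∀ U : Finset V, 0 < (∑ i ∈ U, δ i) → (∑ i ∈ U, δ i) ≤ (∑ i, δ i) / 2 →
      h * (∑ i ∈ U, δ i) ≤ ∑ i ∈ U, ∑ j ∈ Finset.univ \ U, w i j)
    (g : V → ℝ) (hg : ∀ i, 0 ≤ g i)
    (hsupp : (∑ i ∈ Finset.univ.filter (fun i => 0 < g i), δ i) ≤ (∑ i, δ i) / 2) :
    (h ^ 2 / (2 * C)) * ∑ i, δ i * (g i) ^ 2 ≤
      (1 / 2) * ∑ i, ∑ j, w i j * (g i - g j) ^ 2 := by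
  set N := ∑ i, δ i * (g i) ^ 2 with hN
  set A := ∑ i, ∑ j, w i j * (g i - g j) ^ 2 with hA
  have hN0 : 0 ≤ N := Finset.sum_nonneg fun i _ =>
    mul_nonneg (hδ i).le (sq_nonneg _)
  have hA0 : 0 ≤ A := Finset.sum_nonneg fun i _ => Finset.sum_nonneg fun j _ =>
    mul_nonneg (hw i j) (sq_nonneg _)
  -- level-set hypothesis for f = g^2
  have hlev : ∀ t : ℝ, 0 < t →
      (Finset.univ.filter (fun i => t ≤ (g i) ^ 2)).Nonempty →
      h * ∑ i ∈ Finset.univ.filter (fun i => t ≤ (g i) ^ 2), δ i ≤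
        ∑ i ∈ Finset.univ.filter (fun i => t ≤ (g i) ^ 2),
          ∑ j ∈ Finset.univ \ Finset.univ.filter (fun i => t ≤ (g i) ^ 2), w i j := by
    intro t ht hne
    set L := Finset.univ.filter (fun i => t ≤ (g i) ^ 2) with hL
    have hvolpos : 0 < ∑ i ∈ L, δ i :=
      Finset.sum_pos (fun i _ => hδ i) hne
    have hLsub : L ⊆ Finset.univ.filter (fun i => 0 < g i) := by
      intro i hi
      have hti : t ≤ (g i) ^ 2 := (Finset.mem_filter.1 hi).2
      have : 0 < g i := by
        rcases lt_or_eq_of_le (hg i) with h1 | h1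
        · exact h1
        · exfalso; rw [← h1] at hti; simp at hti; linarith
      simp [this]
    have hvolle : (∑ i ∈ L, δ i) ≤ (∑ i, δ i) / 2 :=
      le_trans (Finset.sum_le_sum_of_subset_of_nonneg hLsub (fun i _ _ => (hδ i).le)) hsupp
    exact hUb L hvolpos hvolle
  have hcard := le_refl (Finset.univ.filter (fun i => 0 < (fun i => (g i) ^ 2) i)).card
  have coarea := cheeger_coarea V δ w hw hsymm h
    (Finset.univ.filter (fun i => 0 < (g i) ^ 2)).card
    (fun i => (g i) ^ 2) (fun i => sq_nonneg _) (le_refl _) hlev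
  set S := ∑ i, ∑ j, w i j * |(g i) ^ 2 - (g j) ^ 2| with hS
  -- Cauchy-Schwarz : S^2 ≤ A * B
  set B := ∑ i, ∑ j, w i j * (g i + g j) ^ 2 with hB
  have hCS : S ^ 2 ≤ A * B := by
    have e1 : S = ∑ p ∈ Finset.univ ×ˢ Finset.univ,
        (Real.sqrt (w p.1 p.2) * |g p.1 - g p.2|) * (Real.sqrt (w p.1 p.2) * (g p.1 + g p.2)) := by
      rw [Finset.sum_product]
      apply Finset.sum_congr rfl; intro i _
      apply Finset.sum_congr rfl; intro j _
      have : Real.sqrt (w i j) * |g i - g j| * (Real.sqrt (w i j) * (g i + g j))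
          = w i j * (|g i - g j| * (g i + g j)) := by
        rw [show Real.sqrt (w i j) * |g i - g j| * (Real.sqrt (w i j) * (g i + g j))
            = Real.sqrt (w i j) * Real.sqrt (w i j) * (|g i - g j| * (g i + g j)) by ring,
          Real.mul_self_sqrt (hw i j)]
      rw [this]
      congr 1
      rw [← abs_of_nonneg (by linarith [hg i, hg j] : (0:ℝ) ≤ g i + g j), ← abs_mul]
      congr 1
      ring
    have e2 : A = ∑ p ∈ Finset.univ ×ˢ Finset.univ,
        (Real.sqrt (w p.1 p.2) * |g p.1 - g p.2|) ^ 2 := by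
      rw [Finset.sum_product]
      apply Finset.sum_congr rfl; intro i _
      apply Finset.sum_congr rfl; intro j _
      rw [mul_pow, Real.sq_sqrt (hw i j), sq_abs]
    have e3 : B = ∑ p ∈ Finset.univ ×ˢ Finset.univ,
        (Real.sqrt (w p.1 p.2) * (g p.1 + g p.2)) ^ 2 := by
      rw [Finset.sum_product]
      apply Finset.sum_congr rfl; intro i _
      apply Finset.sum_congr rfl; intro j _
      rw [mul_pow, Real.sq_sqrt (hw i j)]
    rw [e1, e2, e3]
    exact Finset.sum_mul_sq_le_sq_mul_sq _ _ _
  -- B ≤ 4 C N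
  have hBle : B ≤ 4 * C * N := by
    have step1 : B ≤ ∑ i, ∑ j, (2 * (w i j * (g i) ^ 2) + 2 * (w i j * (g j) ^ 2)) := by
      apply Finset.sum_le_sum; intro i _
      apply Finset.sum_le_sum; intro j _
      nlinarith [hw i j, sq_nonneg (g i - g j), sq_nonneg (g i + g j)]
    have row : ∀ i, (∑ j, w i j * (g i) ^ 2) ≤ C * (δ i * (g i) ^ 2) := by
      intro i
      rw [← Finset.sum_mul]
      calc (∑ j, w i j) * (g i) ^ 2 ≤ (C * δ i) * (g i) ^ 2 :=
            mul_le_mul_of_nonneg_right (hCdeg i) (sq_nonneg _)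
        _ = C * (δ i * (g i) ^ 2) := by ring
    have sum1 : (∑ i, ∑ j, w i j * (g i) ^ 2) ≤ C * N := by
      rw [hN, Finset.mul_sum]
      exact Finset.sum_le_sum fun i _ => row i
    have sum2 : (∑ i, ∑ j, w i j * (g j) ^ 2) ≤ C * N := by
      rw [Finset.sum_comm]
      have : ∀ j, (∑ i, w i j * (g j) ^ 2) ≤ C * (δ j * (g j) ^ 2) := by
        intro j
        have : (∑ i, w i j * (g j) ^ 2) = ∑ i, w j i * (g j) ^ 2 :=
          Finset.sum_congr rfl fun i _ => by rw [hsymm i j]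
        rw [this]
        exact row j
      calc (∑ j, ∑ i, w i j * (g j) ^ 2) ≤ ∑ j, C * (δ j * (g j) ^ 2) :=
            Finset.sum_le_sum fun j _ => this j
        _ = C * N := by rw [hN, Finset.mul_sum]
    calc B ≤ ∑ i, ∑ j, (2 * (w i j * (g i) ^ 2) + 2 * (w i j * (g j) ^ 2)) := step1
      _ = 2 * (∑ i, ∑ j, w i j * (g i) ^ 2) + 2 * (∑ i, ∑ j, w i j * (g j) ^ 2) := by
          simp only [Finset.sum_add_distrib, Finset.mul_sum]
      _ ≤ 2 * (C * N) + 2 * (C * N) := by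
          have := sum1; have := sum2
          gcongr
      _ = 4 * C * N := by ring
  -- combine
  have hS0 : 0 ≤ 2 * h * N := by positivity
  have hsq : (2 * h * N) ^ 2 ≤ S ^ 2 := by
    have := coarea
    nlinarith [this]
  have key : 4 * (h ^ 2) * N ^ 2 ≤ 4 * C * N * A := by
    calc 4 * (h ^ 2) * N ^ 2 = (2 * h * N) ^ 2 := by ring
      _ ≤ S ^ 2 := hsq
      _ ≤ A * B := hCS
      _ ≤ A * (4 * C * N) := mul_le_mul_of_nonneg_left hBle hA0
      _ = 4 * C * N * A := by ring
  rcases eq_or_lt_of_le hN0 with hN' | hN'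
  · rw [← hN', mul_zero]
    linarith
  · have h1 : h ^ 2 * N ≤ C * A := by nlinarith
    rw [div_mul_eq_mul_div, div_le_iff₀ (by positivity : (0:ℝ) < 2 * C)]
    nlinarith

theorem cheeger_inequality
    (V : Type) [Fintype V] [Nonempty V]
    (δ : V → ℝ) (hδ : ∀ i, 0 < δ i)
    (w : V → V → ℝ) (hw : ∀ i j, 0 ≤ w i j) (hsymm : ∀ i j, w i j = w j i)
    (hdiag : ∀ i, w i i = 0)
    (C : ℝ) (hC : 0 < C) (hCdeg : ∀ i, (∑ j, w i j) ≤ C * δ i)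
    (h : ℝ)
    (hh : h = sInf { r : ℝ | ∃ U : Finset V,
      0 < (∑ i ∈ U, δ i) ∧ (∑ i ∈ U, δ i) ≤ (∑ i, δ i) / 2 ∧
      r = (∑ i ∈ U, ∑ j ∈ Finset.univ \ U, w i j) / (∑ i ∈ U, δ i) })
    (u : V → ℝ) (hu : (∑ i, δ i * u i) = 0) :
    (h ^ 2 / (2 * C)) * ∑ i, δ i * (u i) ^ 2 ≤
      (1 / 2) * ∑ i, ∑ j, w i j * (u i - u j) ^ 2 := by
  classical
  have hvolpos : 0 < ∑ i, δ i := Finset.sum_pos (fun i _ => hδ i) Finset.univ_nonempty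
  have hSnonneg : ∀ r ∈ { r : ℝ | ∃ U : Finset V,
      0 < (∑ i ∈ U, δ i) ∧ (∑ i ∈ U, δ i) ≤ (∑ i, δ i) / 2 ∧
      r = (∑ i ∈ U, ∑ j ∈ Finset.univ \ U, w i j) / (∑ i ∈ U, δ i) }, 0 ≤ r := by
    rintro r ⟨U, hU1, _, rfl⟩
    exact div_nonneg (Finset.sum_nonneg fun i _ => Finset.sum_nonneg fun j _ => hw i j) hU1.le
  have h0 : 0 ≤ h := by
    rw [hh]
    exact Real.sInf_nonneg hSnonneg
  have hUb : ∀ U : Finset V, 0 < (∑ i ∈ U, δ i) → (∑ i ∈ U, δ i) ≤ (∑ i, δ i) / 2 →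
      h * (∑ i ∈ U, δ i) ≤ ∑ i ∈ U, ∑ j ∈ Finset.univ \ U, w i j := by
    intro U h1 h2
    have hr : (∑ i ∈ U, ∑ j ∈ Finset.univ \ U, w i j) / (∑ i ∈ U, δ i) ∈
        { r : ℝ | ∃ U : Finset V,
          0 < (∑ i ∈ U, δ i) ∧ (∑ i ∈ U, δ i) ≤ (∑ i, δ i) / 2 ∧
          r = (∑ i ∈ U, ∑ j ∈ Finset.univ \ U, w i j) / (∑ i ∈ U, δ i) } := ⟨U, h1, h2, rfl⟩
    have hle : h ≤ (∑ i ∈ U, ∑ j ∈ Finset.univ \ U, w i j) / (∑ i ∈ U, δ i) := by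
      rw [hh]
      exact csInf_le ⟨0, hSnonneg⟩ hr
    calc h * (∑ i ∈ U, δ i)
        ≤ ((∑ i ∈ U, ∑ j ∈ Finset.univ \ U, w i j) / (∑ i ∈ U, δ i)) * (∑ i ∈ U, δ i) :=
          mul_le_mul_of_nonneg_right hle h1.le
      _ = ∑ i ∈ U, ∑ j ∈ Finset.univ \ U, w i j := div_mul_cancel₀ _ (ne_of_gt h1)
  -- median
  set T := Finset.image u Finset.univ with hT
  have hTne : T.Nonempty := Finset.univ_nonempty.image u
  set Good := T.filter (fun c => (∑ i, δ i) / 2 ≤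
      ∑ i ∈ Finset.univ.filter (fun i => u i ≤ c), δ i) with hGood
  have hmaxGood : T.max' hTne ∈ Good := by
    refine Finset.mem_filter.2 ⟨T.max'_mem hTne, ?_⟩
    have hall : Finset.univ.filter (fun i => u i ≤ T.max' hTne) = Finset.univ := by
      ext i
      simp only [Finset.mem_filter, Finset.mem_univ, true_and, iff_true]
      exact T.le_max' (u i) (Finset.mem_image_of_mem u (Finset.mem_univ i))
    rw [hall]
    linarith
  have hGoodne : Good.Nonempty := ⟨_, hmaxGood⟩
  set c := Good.min' hGoodne with hcdef
  have hc : (∑ i, δ i) / 2 ≤ ∑ i ∈ Finset.univ.filter (fun i => u i ≤ c), δ i :=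
    (Finset.mem_filter.1 (Good.min'_mem hGoodne)).2
  have hAbove : (∑ i ∈ Finset.univ.filter (fun i => c < u i), δ i) ≤ (∑ i, δ i) / 2 := by
    have hsplit := Finset.sum_filter_add_sum_filter_not Finset.univ (fun i => u i ≤ c) δ
    have heq : Finset.univ.filter (fun i => c < u i)
        = Finset.univ.filter (fun i => ¬ u i ≤ c) := by
      ext i; simp [not_le]
    rw [heq]
    linarith
  have hBelow : (∑ i ∈ Finset.univ.filter (fun i => u i < c), δ i) ≤ (∑ i, δ i) / 2 := by
    by_contra hcon
    push_neg at hcon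
    set W := Finset.univ.filter (fun i => u i < c) with hW
    have hWne : W.Nonempty := by
      rcases W.eq_empty_or_nonempty with he | hne
      · rw [he] at hcon; simp at hcon; linarith
      · exact hne
    obtain ⟨i₁, hi₁, hmax⟩ := W.exists_max_image u hWne
    have hc'T : u i₁ ∈ T := Finset.mem_image_of_mem u (Finset.mem_univ i₁)
    have hc'lt : u i₁ < c := (Finset.mem_filter.1 hi₁).2
    have hWsub : W ⊆ Finset.univ.filter (fun i => u i ≤ u i₁) := by
      intro i hi
      exact Finset.mem_filter.2 ⟨Finset.mem_univ i, hmax i hi⟩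
    have hge : (∑ i, δ i) / 2 ≤ ∑ i ∈ Finset.univ.filter (fun i => u i ≤ u i₁), δ i :=
      le_trans hcon.le
        (Finset.sum_le_sum_of_subset_of_nonneg hWsub (fun i _ _ => (hδ i).le))
    have hc'Good : u i₁ ∈ Good := Finset.mem_filter.2 ⟨hc'T, hge⟩
    have := Good.min'_le (u i₁) hc'Good
    linarith
  -- positive and negative parts
  set gp : V → ℝ := fun i => max (u i - c) 0 with hgp
  set gm : V → ℝ := fun i => max (c - u i) 0 with hgm
  have hgp0 : ∀ i, 0 ≤ gp i := fun i => le_max_right _ _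
  have hgm0 : ∀ i, 0 ≤ gm i := fun i => le_max_right _ _
  have hprod : ∀ i, gp i * gm i = 0 := by
    intro i
    rcases le_total (u i) c with hle | hle
    · have : gp i = 0 := max_eq_right (by linarith)
      rw [this, zero_mul]
    · have : gm i = 0 := max_eq_right (by linarith)
      rw [this, mul_zero]
  have hdiff : ∀ i, gp i - gm i = u i - c := by
    intro i
    rcases le_total (u i) c with hle | hle
    · rw [hgp, hgm]
      simp only []
      rw [max_eq_right (by linarith : u i - c ≤ (0:ℝ)), max_eq_left (by linarith : (0:ℝ) ≤ c - u i)]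
      ring
    · rw [hgp, hgm]
      simp only []
      rw [max_eq_left (by linarith : (0:ℝ) ≤ u i - c), max_eq_right (by linarith : c - u i ≤ (0:ℝ))]
      ring
  have hsuppp : Finset.univ.filter (fun i => 0 < gp i)
      = Finset.univ.filter (fun i => c < u i) := by
    ext i
    simp only [Finset.mem_filter, Finset.mem_univ, true_and, hgp, lt_max_iff, lt_irrefl,
      or_false, sub_pos]
  have hsuppm : Finset.univ.filter (fun i => 0 < gm i)
      = Finset.univ.filter (fun i => u i < c) := by
    ext i
    simp only [Finset.mem_filter, Finset.mem_univ, true_and, hgm, lt_max_iff, lt_irrefl,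
      or_false, sub_pos]
  have Hp := cheeger_part V δ hδ w hw hsymm C hC hCdeg h h0 hUb gp hgp0
    (by rw [hsuppp]; exact hAbove)
  have Hm := cheeger_part V δ hδ w hw hsymm C hC hCdeg h h0 hUb gm hgm0
    (by rw [hsuppm]; exact hBelow)
  -- pointwise Dirichlet comparison
  have hdir : ∀ i j, (gp i - gp j) ^ 2 + (gm i - gm j) ^ 2 ≤ (u i - u j) ^ 2 := by
    intro i j
    have e : u i - u j = (gp i - gm i) - (gp j - gm j) := by
      rw [hdiff i, hdiff j]; ring
    rw [e]
    nlinarith [mul_nonneg (hgp0 i) (hgm0 j), mul_nonneg (hgp0 j) (hgm0 i),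
      hprod i, hprod j]
  have hsumpt : ∀ i, gp i ^ 2 + gm i ^ 2 = (u i - c) ^ 2 := by
    intro i
    calc gp i ^ 2 + gm i ^ 2 = (gp i - gm i) ^ 2 + 2 * (gp i * gm i) := by ring
      _ = (u i - c) ^ 2 := by rw [hdiff i, hprod i]; ring
  -- norm comparison
  have hnorm : (∑ i, δ i * (u i) ^ 2) ≤ ∑ i, δ i * (u i - c) ^ 2 := by
    have expand : ∑ i, δ i * (u i - c) ^ 2
        = (∑ i, δ i * (u i) ^ 2) - 2 * c * (∑ i, δ i * u i) + c ^ 2 * (∑ i, δ i) := by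
      have pt : ∀ i, δ i * (u i - c) ^ 2
          = δ i * (u i) ^ 2 - 2 * c * (δ i * u i) + c ^ 2 * δ i := by
        intro i; ring
      rw [Finset.sum_congr rfl (fun i _ => pt i)]
      rw [Finset.sum_add_distrib, Finset.sum_sub_distrib, ← Finset.mul_sum, ← Finset.mul_sum]
    rw [expand, hu]
    nlinarith [mul_nonneg (sq_nonneg c) hvolpos.le]
  have hsplitnorm : (∑ i, δ i * (u i - c) ^ 2)
      = (∑ i, δ i * gp i ^ 2) + ∑ i, δ i * gm i ^ 2 := by
    rw [← Finset.sum_add_distrib]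
    apply Finset.sum_congr rfl
    intro i _
    rw [← hsumpt i]
    ring
  have hdirsum : (∑ i, ∑ j, w i j * (gp i - gp j) ^ 2) + (∑ i, ∑ j, w i j * (gm i - gm j) ^ 2)
      ≤ ∑ i, ∑ j, w i j * (u i - u j) ^ 2 := by
    have : ∀ i, (∑ j, w i j * (gp i - gp j) ^ 2) + (∑ j, w i j * (gm i - gm j) ^ 2)
        = ∑ j, (w i j * (gp i - gp j) ^ 2 + w i j * (gm i - gm j) ^ 2) := by
      intro i; rw [Finset.sum_add_distrib]
    rw [← Finset.sum_add_distrib]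
    apply Finset.sum_le_sum
    intro i _
    rw [← Finset.sum_add_distrib]
    apply Finset.sum_le_sum
    intro j _
    calc w i j * (gp i - gp j) ^ 2 + w i j * (gm i - gm j) ^ 2
        = w i j * ((gp i - gp j) ^ 2 + (gm i - gm j) ^ 2) := by ring
      _ ≤ w i j * (u i - u j) ^ 2 := mul_le_mul_of_nonneg_left (hdir i j) (hw i j)
  have hcoef : 0 ≤ h ^ 2 / (2 * C) := by positivity
  calc (h ^ 2 / (2 * C)) * ∑ i, δ i * (u i) ^ 2
      ≤ (h ^ 2 / (2 * C)) * ∑ i, δ i * (u i - c) ^ 2 :=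
        mul_le_mul_of_nonneg_left hnorm hcoef
    _ = (h ^ 2 / (2 * C)) * (∑ i, δ i * gp i ^ 2)
        + (h ^ 2 / (2 * C)) * (∑ i, δ i * gm i ^ 2) := by rw [hsplitnorm]; ring
    _ ≤ (1 / 2) * (∑ i, ∑ j, w i j * (gp i - gp j) ^ 2)
        + (1 / 2) * (∑ i, ∑ j, w i j * (gm i - gm j) ^ 2) := add_le_add Hp Hm
    _ ≤ (1 / 2) * ∑ i, ∑ j, w i j * (u i - u j) ^ 2 := by linarith [hdirsum]
end
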